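/- For positive definite matrices A and B, the spectral geometric mean A ♮ B = (A^{-1} # B)^{1/2} A (A^{-1} # B)^{1/2} is a midpoint of A and B for the semi-metric d(X,Y) = 2‖log(X^{-1} # Y)‖: namely d(A, A ♮ B) = d(B, A ♮ B) = (1/2) d(A,B). -/

import Mathlib

open scoped Matrix.Norms.L2Operator ComplexOrder

variable {n : Type*} [Fintype n] [DecidableEq n]

/-- Real power of a (Hermitian) matrix via the continuous functional calculus. -/
noncomputable def mpow (A : Matrix n n ℂ) (t : ℝ) : Matrix n n ℂ :=
  cfc (fun x : ℝ => x ^ t) A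

/-- Matrix logarithm via the continuous functional calculus. -/
noncomputable def mlog (A : Matrix n n ℂ) : Matrix n n ℂ :=
  cfc Real.log A

/-- The geometric mean `A # B = A^{1/2} (A^{-1/2} B A^{-1/2})^{1/2} A^{1/2}`. -/
noncomputable def geo (A B : Matrix n n ℂ) : Matrix n n ℂ :=
  mpow A (1/2) * mpow (mpow A (-(1/2)) * B * mpow A (-(1/2))) (1/2) * mpow A (1/2)

/-- The weighted geometric mean `A #ₜ B = A^{1/2} (A^{-1/2} B A^{-1/2})^t A^{1/2}`. -/
noncomputable def wgeo (t : ℝ) (A B : Matrix n n ℂ) : Matrix n n ℂ :=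
  mpow A (1/2) * mpow (mpow A (-(1/2)) * B * mpow A (-(1/2))) t * mpow A (1/2)

/-- The weighted spectral geometric mean `A ♮ₜ B = (A⁻¹ # B)^t A (A⁻¹ # B)^t`. -/
noncomputable def sgeo (t : ℝ) (A B : Matrix n n ℂ) : Matrix n n ℂ :=
  mpow (geo A⁻¹ B) t * A * mpow (geo A⁻¹ B) t

/-- Semi-metric `d(A,B) = 2 ‖log (A⁻¹ # B)‖` (operator norm). -/
noncomputable def dsm (A B : Matrix n n ℂ) : ℝ :=
  2 * ‖mlog (geo A⁻¹ B)‖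

/-- Loewner order: `Loewner A B` means `A ≤ B`, i.e. `B - A` is positive semidefinite. -/
def Loewner (A B : Matrix n n ℂ) : Prop := (B - A).PosSemidef

/-!
Put `S = A⁻¹ # B`. Unfolding the definition, `S = A^{-1/2} (A^{1/2} B A^{1/2})^{1/2} A^{-1/2}`,
so `S` solves the Riccati equation `S A S = B`; by the same unfolding, `X⁻¹ # (G X G) = G` for
all positive definite `X` and `G`. With `G = S^{1/2}` the spectral mean is
`A ♮ B = G A G = S^{-1/2} B S^{-1/2}`, hence `A⁻¹ # (A ♮ B) = S^{1/2}` and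
`B⁻¹ # (A ♮ B) = S^{-1/2}`, whose logarithms are `± ½ log S`.
-/

open Matrix

lemma Matrix.continuousOn_spectrum (f : ℝ → ℝ) (A : Matrix n n ℂ) :
    ContinuousOn f (spectrum ℝ A) :=
  A.finite_real_spectrum.continuousOn f

section PosDef

variable {A : Matrix n n ℂ}

open scoped MatrixOrder in
lemma Matrix.PosDef.spectrum_pos (hA : A.PosDef) : ∀ x ∈ spectrum ℝ A, 0 < x :=
  (StarOrderedRing.isStrictlyPositive_iff_spectrum_pos A hA.1).1 hA.isStrictlyPositive

open scoped MatrixOrder in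
lemma Matrix.PosDef.cfc_posDef {f : ℝ → ℝ} (hA : A.PosDef)
    (hf : ∀ x ∈ spectrum ℝ A, 0 < f x) : (cfc f A).PosDef :=
  ((cfc_isStrictlyPositive_iff f A (A.continuousOn_spectrum f) hA.1).2 hf).posDef

lemma mpow_posDef (hA : A.PosDef) (t : ℝ) : (mpow A t).PosDef :=
  hA.cfc_posDef fun x hx => Real.rpow_pos_of_pos (hA.spectrum_pos x hx) t

lemma mpow_mul_mpow (hA : A.PosDef) (a b : ℝ) : mpow A a * mpow A b = mpow A (a + b) := by
  rw [mpow, mpow, ← cfc_mul _ _ _ (A.continuousOn_spectrum _) (A.continuousOn_spectrum _)]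
  exact cfc_congr fun x hx => (Real.rpow_add (hA.spectrum_pos x hx) a b).symm

lemma mpow_zero (hA : A.PosDef) : mpow A 0 = 1 :=
  (cfc_congr fun x _ => Real.rpow_zero x).trans (cfc_const_one ℝ A hA.1)

lemma mpow_one (hA : A.PosDef) : mpow A 1 = A :=
  (cfc_congr fun x _ => Real.rpow_one x).trans (cfc_id' ℝ A hA.1)

lemma mpow_mpow (hA : A.PosDef) (a b : ℝ) : mpow (mpow A a) b = mpow A (a * b) := by
  rw [mpow, mpow, mpow, ← cfc_comp' (fun x : ℝ => x ^ b) (fun x : ℝ => x ^ a) A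
    ((A.finite_real_spectrum.image _).continuousOn _) (A.continuousOn_spectrum _)
    hA.1.isSelfAdjoint]
  exact cfc_congr fun x hx => (Real.rpow_mul (hA.spectrum_pos x hx).le a b).symm

lemma mlog_mpow (hA : A.PosDef) (t : ℝ) : mlog (mpow A t) = t • mlog A := by
  rw [mlog, mpow, mlog, ← cfc_comp' Real.log (fun x : ℝ => x ^ t) A
    ((A.finite_real_spectrum.image _).continuousOn _) (A.continuousOn_spectrum _)
    hA.1.isSelfAdjoint,
    ← cfc_smul t Real.log A (A.continuousOn_spectrum _)]
  exact cfc_congr fun x hx => Real.log_rpow (hA.spectrum_pos x hx) t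

lemma norm_mlog_mpow (hA : A.PosDef) (t : ℝ) : ‖mlog (mpow A t)‖ = |t| * ‖mlog A‖ := by
  rw [mlog_mpow hA, norm_smul, Real.norm_eq_abs]

lemma mpow_mul_mul_mpow (hA : A.PosDef) (a b : ℝ) (M : Matrix n n ℂ) :
    mpow A a * (mpow A b * M * mpow A b) * mpow A a = mpow A (a + b) * M * mpow A (a + b) := calc
  _ = (mpow A a * mpow A b) * M * (mpow A b * mpow A a) := by simp only [mul_assoc]
  _ = _ := by rw [mpow_mul_mpow hA, mpow_mul_mpow hA, add_comm b a]

lemma mpow_neg_mul_mpow (hA : A.PosDef) (t : ℝ) : mpow A (-t) * mpow A t = 1 := by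
  rw [mpow_mul_mpow hA, neg_add_cancel, mpow_zero hA]

lemma mpow_mul_mpow_neg (hA : A.PosDef) (t : ℝ) : mpow A t * mpow A (-t) = 1 := by
  rw [mpow_mul_mpow hA, add_neg_cancel, mpow_zero hA]

lemma mpow_inv (hA : A.PosDef) (t : ℝ) : mpow A⁻¹ t = mpow A (-t) := by
  have hinv : A⁻¹ = mpow A (-1) := by
    refine inv_eq_right_inv ?_
    calc A * mpow A (-1) = mpow A 1 * mpow A (-1) := by rw [mpow_one hA]
      _ = 1 := mpow_mul_mpow_neg hA 1
  rw [hinv, mpow_mpow hA, neg_one_mul]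

lemma mpow_neg_half_mul_mul_self (hA : A.PosDef) :
    mpow A (-(1/2)) * A * mpow A (-(1/2)) = 1 :=
  calc mpow A (-(1/2)) * A * mpow A (-(1/2))
      = mpow A (-(1/2)) * mpow A 1 * mpow A (-(1/2)) := by rw [mpow_one hA]
    _ = 1 := by rw [mpow_mul_mpow hA, mpow_mul_mpow hA]; norm_num [mpow_zero hA]

lemma mpow_half_mul_mpow_half (hA : A.PosDef) : mpow A (1/2) * mpow A (1/2) = A := by
  rw [mpow_mul_mpow hA, add_halves, mpow_one hA]

lemma mpow_mul_self_half (hA : A.PosDef) : mpow (A * A) (1/2) = A := by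
  rw [← mpow_one hA, mpow_mul_mpow hA, mpow_mpow hA]
  norm_num

lemma mpow_mul_mul_mpow_posDef {M : Matrix n n ℂ} (hA : A.PosDef) (hM : M.PosDef) (t : ℝ) :
    (mpow A t * M * mpow A t).PosDef := by
  have hU : IsUnit (mpow A t) := (mpow_posDef hA t).isUnit
  simpa only [(mpow_posDef hA t).1.star_eq] using hU.posDef_star_right_conjugate_iff.2 hM

end PosDef

section GeometricMean

variable {A B : Matrix n n ℂ}

lemma geo_posDef (hA : A.PosDef) (hB : B.PosDef) : (geo A B).PosDef :=
  mpow_mul_mul_mpow_posDef hA (mpow_posDef (mpow_mul_mul_mpow_posDef hA hB _) _) _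

lemma geo_inv_eq (hA : A.PosDef) (B : Matrix n n ℂ) :
    geo A⁻¹ B =
      mpow A (-(1/2)) * mpow (mpow A (1/2) * B * mpow A (1/2)) (1/2) * mpow A (-(1/2)) := by
  rw [geo, mpow_inv hA, mpow_inv hA, neg_neg]

lemma geo_inv_mul_mul_geo_inv (hA : A.PosDef) (hB : B.PosDef) :
    geo A⁻¹ B * A * geo A⁻¹ B = B := by
  set D := mpow A (1/2) * B * mpow A (1/2)
  have hD : D.PosDef := mpow_mul_mul_mpow_posDef hA hB _
  have hgeo : geo A⁻¹ B = mpow A (-(1/2)) * mpow D (1/2) * mpow A (-(1/2)) := geo_inv_eq hA B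
  calc geo A⁻¹ B * A * geo A⁻¹ B
      = mpow A (-(1/2)) * mpow D (1/2) * (mpow A (-(1/2)) * A * mpow A (-(1/2)))
          * mpow D (1/2) * mpow A (-(1/2)) := by rw [hgeo]; simp only [mul_assoc]
    _ = mpow A (-(1/2)) * (mpow D (1/2) * mpow D (1/2)) * mpow A (-(1/2)) := by
          rw [mpow_neg_half_mul_mul_self hA]; simp only [mul_one, mul_assoc]
    _ = mpow A (-(1/2)) * mpow A (1/2) * B * (mpow A (1/2) * mpow A (-(1/2))) := by
          rw [mpow_half_mul_mpow_half hD]; simp only [D, mul_assoc]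
    _ = B := by rw [mpow_neg_mul_mpow hA, mpow_mul_mpow_neg hA, one_mul, mul_one]

lemma geo_inv_mul_mul_self {G : Matrix n n ℂ} (hA : A.PosDef) (hG : G.PosDef) :
    geo A⁻¹ (G * A * G) = G := by
  set T := mpow A (1/2) * G * mpow A (1/2)
  have hT : T.PosDef := mpow_mul_mul_mpow_posDef hA hG _
  have hTT : mpow A (1/2) * (G * A * G) * mpow A (1/2) = T * T := calc
    _ = mpow A (1/2) * G * (mpow A (1/2) * mpow A (1/2)) * G * mpow A (1/2) := by
      rw [mpow_half_mul_mpow_half hA]; simp only [mul_assoc]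
    _ = T * T := by simp only [T, mul_assoc]
  calc geo A⁻¹ (G * A * G)
      = mpow A (-(1/2)) * mpow A (1/2) * G * (mpow A (1/2) * mpow A (-(1/2))) := by
        rw [geo_inv_eq hA, hTT, mpow_mul_self_half hT]; simp only [T, mul_assoc]
    _ = G := by rw [mpow_neg_mul_mpow hA, mpow_mul_mpow_neg hA, one_mul, mul_one]

lemma dsm_mul_mul_self {G : Matrix n n ℂ} (hA : A.PosDef) (hG : G.PosDef) :
    dsm A (G * A * G) = 2 * ‖mlog G‖ := by
  rw [dsm, geo_inv_mul_mul_self hA hG]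

end GeometricMean

/-- the spectral geometric mean `A ♮ B` is a midpoint of `A`
and `B` for the semi-metric `d`. -/
theorem stmt11 (A B : Matrix n n ℂ) (hA : A.PosDef) (hB : B.PosDef) :
    dsm A (sgeo (1/2) A B) = (1/2) * dsm A B ∧
    dsm B (sgeo (1/2) A B) = (1/2) * dsm A B := by
  set S := geo A⁻¹ B
  have hS : S.PosDef := geo_posDef hA.inv hB
  have hAB : dsm A B = 2 * ‖mlog S‖ := rfl
  have hmid : sgeo (1/2) A B = mpow S (-(1/2)) * B * mpow S (-(1/2)) := calc
    sgeo (1/2) A B = mpow S (1/2) * A * mpow S (1/2) := rfl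
    _ = mpow S (-(1/2)) * (mpow S 1 * A * mpow S 1) * mpow S (-(1/2)) := by
      rw [mpow_mul_mul_mpow hS]; norm_num
    _ = mpow S (-(1/2)) * B * mpow S (-(1/2)) := by
      rw [mpow_one hS, geo_inv_mul_mul_geo_inv hA hB]
  constructor
  · rw [sgeo, dsm_mul_mul_self hA (mpow_posDef hS _), norm_mlog_mpow hS, hAB]
    norm_num; ring
  · rw [hmid, dsm_mul_mul_self hB (mpow_posDef hS _), norm_mlog_mpow hS, hAB]
    norm_num; ring
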